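/- arXiv:0708.4149 — 6 statements merged into one kernel-verified Lean document; each statement's English description precedes it below -/
import Mathlib

section
/- Let A be an m×n real matrix with all entries nonnegative whose rank is exactly k (k ≥ 1), and let W₀ ∈ ℝ^{m×k}, H₀ ∈ ℝ^{k×n} be any matrices with A = W₀H₀. Then there exist entrywise nonnegative matrices W ∈ ℝ^{m×k} and H ∈ ℝ^{k×n} with A = WH if and only if there exists an invertible matrix Q ∈ ℝ^{k×k} such that W₀Q⁻¹ and QH₀ are both entrywise nonnegative. -/
/-!
If `A = W * H` has rank equal to the inner dimension `k`, then `W` has a left inverse and `H`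
a right inverse. Given two such factorizations `W₀ * H₀ = W * H`, the matrix `Q := L * W₀`
(`L` a left inverse of `W`) satisfies `Q * H₀ = H` and `W * Q = W₀`, and is invertible because
`L₀ * W` (`L₀` a left inverse of `W₀`) is a left inverse of it. So every nonnegative
factorization is obtained from `W₀, H₀` by an invertible change of basis `Q`.
-/

open Matrix

namespace Matrix

variable {R : Type*} {m n k : Type*} [Fintype k]

section Field

variable [Field R]

theorem rank_eq_card_width_of_rank_mul {X : Matrix m k R} {Y : Matrix k n R} [Fintype n]
    (h : (X * Y).rank = Fintype.card k) : X.rank = Fintype.card k :=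
  le_antisymm X.rank_le_card_width (h ▸ rank_mul_le_left X Y)

theorem rank_eq_card_height_of_rank_mul {X : Matrix m k R} {Y : Matrix k n R} [Fintype n]
    (h : (X * Y).rank = Fintype.card k) : Y.rank = Fintype.card k :=
  le_antisymm Y.rank_le_card_height (h ▸ rank_mul_le_right X Y)

theorem ker_mulVecLin_eq_bot_of_rank_eq_card_width {X : Matrix m k R}
    (h : X.rank = Fintype.card k) : LinearMap.ker X.mulVecLin = ⊥ := by
  rw [← Submodule.finrank_eq_zero (R := R)]
  have := LinearMap.finrank_range_add_finrank_ker X.mulVecLin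
  rw [Module.finrank_fintype_fun_eq_card] at this
  unfold rank at h
  omega

variable [DecidableEq k]

theorem exists_mul_eq_one_of_rank_eq_card_width [Fintype m] [DecidableEq m] {X : Matrix m k R}
    (h : X.rank = Fintype.card k) : ∃ L : Matrix k m R, L * X = 1 := by
  obtain ⟨g, hg⟩ :=
    X.mulVecLin.exists_leftInverse_of_injective (ker_mulVecLin_eq_bot_of_rank_eq_card_width h)
  refine ⟨LinearMap.toMatrix' g, ?_⟩
  rw [← LinearMap.toMatrix'_toLin' X, ← LinearMap.toMatrix'_comp, Matrix.toLin'_apply', hg,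
    LinearMap.toMatrix'_id]

theorem exists_mul_eq_one_of_rank_eq_card_height [Fintype n] [DecidableEq n] {Y : Matrix k n R}
    (h : Y.rank = Fintype.card k) : ∃ R' : Matrix n k R, Y * R' = 1 := by
  obtain ⟨L, hL⟩ :=
    exists_mul_eq_one_of_rank_eq_card_width (X := Yᵀ) (by rwa [rank_transpose])
  exact ⟨Lᵀ, by rw [← transpose_transpose Y, ← transpose_mul, hL, transpose_one]⟩

end Field

variable [CommRing R] [DecidableEq k] [Fintype m] [Fintype n]

theorem exists_isUnit_of_mul_eq_mul {W₀ W : Matrix m k R} {H₀ H : Matrix k n R}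
    (hWH : W₀ * H₀ = W * H) {L₀ L : Matrix k m R} (hL₀ : L₀ * W₀ = 1) (hL : L * W = 1)
    {R₀ : Matrix n k R} (hR₀ : H₀ * R₀ = 1) :
    ∃ Q : Matrix k k R, IsUnit Q ∧ W₀ * Q⁻¹ = W ∧ Q * H₀ = H := by
  have hW₀ : W₀ = W * H * R₀ := by rw [← hWH, Matrix.mul_assoc, hR₀, Matrix.mul_one]
  have hQH : L * W₀ * H₀ = H := by
    rw [Matrix.mul_assoc, hWH, ← Matrix.mul_assoc, hL, Matrix.one_mul]
  have hWQ : W * (L * W₀) = W₀ :=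
    calc W * (L * W₀) = W * (L * W) * (H * R₀) := by rw [hW₀]; simp only [Matrix.mul_assoc]
      _ = W₀ := by rw [hL, Matrix.mul_one, ← Matrix.mul_assoc, ← hW₀]
  have hQ : IsUnit (L * W₀).det :=
    isUnit_det_of_left_inverse (B := L₀ * W) (by rw [Matrix.mul_assoc, hWQ, hL₀])
  refine ⟨L * W₀, (isUnit_iff_isUnit_det _).mpr hQ, ?_, hQH⟩
  rw [← mul_nonsing_inv_cancel_right (L * W₀) W hQ, hWQ]

end Matrix

theorem exact_nmf_iff_p1_general {m n k : ℕ}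
    (A : Matrix (Fin m) (Fin n) ℝ) (hrank : A.rank = k)
    (W₀ : Matrix (Fin m) (Fin k) ℝ) (H₀ : Matrix (Fin k) (Fin n) ℝ)
    (hfac : A = W₀ * H₀) :
    (∃ (W : Matrix (Fin m) (Fin k) ℝ) (H : Matrix (Fin k) (Fin n) ℝ),
        (∀ i j, 0 ≤ W i j) ∧ (∀ i j, 0 ≤ H i j) ∧ A = W * H) ↔
    (∃ Q : Matrix (Fin k) (Fin k) ℝ, IsUnit Q ∧
        (∀ i j, 0 ≤ (W₀ * Q⁻¹) i j) ∧ (∀ i j, 0 ≤ (Q * H₀) i j)) := by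
  have hrank : A.rank = Fintype.card (Fin k) := by rw [hrank, Fintype.card_fin]
  constructor
  · rintro ⟨W, H, hW, hH, hWH⟩
    obtain ⟨L₀, hL₀⟩ :=
      exists_mul_eq_one_of_rank_eq_card_width (rank_eq_card_width_of_rank_mul (hfac ▸ hrank))
    obtain ⟨L, hL⟩ :=
      exists_mul_eq_one_of_rank_eq_card_width (rank_eq_card_width_of_rank_mul (hWH ▸ hrank))
    obtain ⟨R₀, hR₀⟩ :=
      exists_mul_eq_one_of_rank_eq_card_height (rank_eq_card_height_of_rank_mul (hfac ▸ hrank))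
    obtain ⟨Q, hQ, hWQ, hQH⟩ := exists_isUnit_of_mul_eq_mul (hfac.symm.trans hWH) hL₀ hL hR₀
    exact ⟨Q, hQ, hWQ ▸ hW, hQH ▸ hH⟩
  · rintro ⟨Q, hQ, hWQ, hQH⟩
    refine ⟨W₀ * Q⁻¹, Q * H₀, hWQ, hQH, ?_⟩
    rw [hfac, ← Matrix.mul_assoc,
      nonsing_inv_mul_cancel_right _ _ ((isUnit_iff_isUnit_det Q).mp hQ)]

/-- Theorem 1 (equivalence of EXACT NMF and P1): for a nonnegative matrix `A` of rank
exactly `k ≥ 1` and any factorization `A = W₀ * H₀` through `ℝ^k`, exact NMF has a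
solution iff there is an invertible `Q` with `W₀ * Q⁻¹` and `Q * H₀` nonnegative. -/
theorem exact_nmf_iff_p1 {m n k : ℕ} (hk : 1 ≤ k)
    (A : Matrix (Fin m) (Fin n) ℝ) (hA : ∀ i j, 0 ≤ A i j) (hrank : A.rank = k)
    (W₀ : Matrix (Fin m) (Fin k) ℝ) (H₀ : Matrix (Fin k) (Fin n) ℝ)
    (hfac : A = W₀ * H₀) :
    (∃ (W : Matrix (Fin m) (Fin k) ℝ) (H : Matrix (Fin k) (Fin n) ℝ),
        (∀ i j, 0 ≤ W i j) ∧ (∀ i j, 0 ≤ H i j) ∧ A = W * H) ↔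
    (∃ Q : Matrix (Fin k) (Fin k) ℝ, IsUnit Q ∧
        (∀ i j, 0 ≤ (W₀ * Q⁻¹) i j) ∧ (∀ i j, 0 ≤ (Q * H₀) i j)) :=
  exact_nmf_iff_p1_general A hrank W₀ H₀ hfac
end

section
/- Let W₀ ∈ ℝ^{m×k} and H₀ ∈ ℝ^{k×n} each have rank k (k ≥ 1) and suppose W₀H₀ is entrywise nonnegative. Then there exist an integer m′ with 1 ≤ m′ ≤ m, a matrix W₀′ ∈ ℝ^{m′×k} of rank k whose last column has every entry equal to 1, and a matrix H₀′ ∈ ℝ^{k×n} of rank k with W₀′H₀′ entrywise nonnegative, such that: there exists an invertible Q ∈ ℝ^{k×k} with W₀Q⁻¹ and QH₀ entrywise nonnegative if and only if there exists an invertible Q′ ∈ ℝ^{k×k} with W₀′Q′⁻¹ and Q′H₀′ entrywise nonnegative. -/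
/-!
Take an invertible `B` whose last column is `H₀ 𝟙`. Then `(W₀ B)(B⁻¹ H₀) = W₀ H₀`, and the last
column of `W₀ B` is `W₀ H₀ 𝟙`, the vector of row sums of the nonnegative matrix `W₀ H₀`; since `H₀`
has full row rank, it is positive on every nonzero row of `W₀ B`. Scaling each nonzero row by
the inverse of that entry, and replacing each zero row by a normalized nonzero row, leaves the
row space unchanged and does not change which products `W Y` are nonnegative, since every row of
either matrix is a nonnegative multiple of a row of the other. So the rank and the solvability
of P1 are preserved.
-/

open Matrix

namespace Matrix

section Field

variable {𝕜 : Type*} [Field 𝕜] {l m n : Type*} [Fintype l] [Fintype m] [Fintype n]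

theorem vecMul_injective_of_rank_eq_card {H : Matrix l m 𝕜} (hH : H.rank = Fintype.card l) :
    Function.Injective H.vecMul := by
  rw [vecMul_injective_iff, linearIndependent_iff_card_eq_finrank_span, Set.finrank,
    ← rank_eq_finrank_span_row, hH]

theorem exists_isUnit_col_eq [DecidableEq n] {v : n → 𝕜} (hv : v ≠ 0) (j : n) :
    ∃ B : Matrix n n 𝕜, IsUnit B ∧ ∀ i, B i j = v i := by
  obtain ⟨j₀, hj₀⟩ : ∃ j₀, v j₀ ≠ 0 := Function.ne_iff.mp hv
  let U : Matrix n n 𝕜 := (1 : Matrix n n 𝕜).updateCol j₀ v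
  have hU : U.det = v j₀ := by
    simpa [cramer_one] using (cramer_apply (1 : Matrix n n 𝕜) v j₀).symm
  refine ⟨U.submatrix id (Equiv.swap j j₀), ?_, fun i => by simp [U]⟩
  rw [isUnit_iff_isUnit_det, det_permute', hU]
  exact ((Equiv.Perm.sign _).isUnit.map (Int.castRingHom 𝕜)).mul hj₀.isUnit

end Field

section Order

variable {𝕜 : Type*} [Field 𝕜] [LinearOrder 𝕜] {l m m' n : Type*}

def EntrywiseNonneg (A : Matrix m n 𝕜) : Prop :=
  ∀ i j, 0 ≤ A i j

/-- The P1 instance `(W, H)` is solvable. -/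
def HasNonnegRefactorization [Fintype l] [DecidableEq l] (W : Matrix m l 𝕜) (H : Matrix l n 𝕜) :
    Prop :=
  ∃ Q : Matrix l l 𝕜, IsUnit Q ∧ EntrywiseNonneg (W * Q⁻¹) ∧ EntrywiseNonneg (Q * H)

def RowsNonnegMultiplesOf (W : Matrix m l 𝕜) (W' : Matrix m' l 𝕜) : Prop :=
  ∀ i, ∃ (i' : m') (c : 𝕜), 0 ≤ c ∧ W i = c • W' i'

namespace RowsNonnegMultiplesOf

variable {W : Matrix m l 𝕜} {W' : Matrix m' l 𝕜}

theorem span_row_le (h : RowsNonnegMultiplesOf W W') :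
    Submodule.span 𝕜 (Set.range W.row) ≤ Submodule.span 𝕜 (Set.range W'.row) := by
  rw [Submodule.span_le, Set.range_subset_iff]
  intro i
  obtain ⟨i', c, -, hi⟩ := h i
  have hrow : W.row i = c • W'.row i' := hi
  rw [SetLike.mem_coe, hrow]
  exact Submodule.smul_mem _ c (Submodule.subset_span (Set.mem_range_self i'))

theorem rank_eq [Fintype l] [Fintype m] [Fintype m'] (h : RowsNonnegMultiplesOf W W')
    (h' : RowsNonnegMultiplesOf W' W) : W.rank = W'.rank := by
  rw [rank_eq_finrank_span_row, rank_eq_finrank_span_row, le_antisymm h.span_row_le h'.span_row_le]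

theorem entrywiseNonneg_mul [IsStrictOrderedRing 𝕜] [Fintype l] {Y : Matrix l n 𝕜}
    (h : RowsNonnegMultiplesOf W W') (hY : EntrywiseNonneg (W' * Y)) : EntrywiseNonneg (W * Y) := by
  intro i j
  obtain ⟨i', c, hc, hi⟩ := h i
  rw [mul_apply_eq_vecMul, hi, smul_vecMul, Pi.smul_apply, smul_eq_mul]
  exact mul_nonneg hc (hY i' j)

end RowsNonnegMultiplesOf

theorem HasNonnegRefactorization.of_rowsNonnegMultiplesOf [IsStrictOrderedRing 𝕜] [Fintype l]
    [DecidableEq l] {W : Matrix m l 𝕜} {W' : Matrix m' l 𝕜} {H : Matrix l n 𝕜}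
    (h : RowsNonnegMultiplesOf W W')
    (hW' : HasNonnegRefactorization W' H) : HasNonnegRefactorization W H := by
  obtain ⟨Q, hQ, hW'Q, hQH⟩ := hW'
  exact ⟨Q, hQ, h.entrywiseNonneg_mul hW'Q, hQH⟩

theorem hasNonnegRefactorization_mul_nonsing_inv_iff [Fintype l] [DecidableEq l]
    {W : Matrix m l 𝕜} {H : Matrix l n 𝕜} {B : Matrix l l 𝕜} (hB : IsUnit B) :
    HasNonnegRefactorization (W * B) (B⁻¹ * H) ↔ HasNonnegRefactorization W H := by
  have hBdet := (isUnit_iff_isUnit_det B).mp hB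
  constructor
  · rintro ⟨Q, hQ, hWQ, hQH⟩
    refine ⟨Q * B⁻¹, hQ.mul (isUnit_nonsing_inv_iff.mpr hB), ?_, ?_⟩
    · rwa [mul_inv_rev, nonsing_inv_nonsing_inv B hBdet, ← Matrix.mul_assoc]
    · rwa [Matrix.mul_assoc]
  · rintro ⟨Q, hQ, hWQ, hQH⟩
    refine ⟨Q * B, hQ.mul hB, ?_, ?_⟩
    · rwa [mul_inv_rev, Matrix.mul_assoc, mul_nonsing_inv_cancel_left B _ hBdet]
    · rwa [Matrix.mul_assoc, mul_nonsing_inv_cancel_left B _ hBdet]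

theorem sum_mul_row_pos [IsStrictOrderedRing 𝕜] [Fintype l] [Fintype n] {W : Matrix m l 𝕜}
    {H : Matrix l n 𝕜} (hH : H.rank = Fintype.card l) (hWH : EntrywiseNonneg (W * H)) {i : m}
    (hi : W i ≠ 0) : 0 < ∑ j, (W * H) i j := by
  have hrow : (W * H) i ≠ 0 := by
    rw [mul_apply_eq_vecMul, ← zero_vecMul H]
    exact (vecMul_injective_of_rank_eq_card hH).ne hi
  obtain ⟨j, hj⟩ := Function.ne_iff.mp hrow
  exact Finset.sum_pos' (fun j _ => hWH i j) ⟨j, Finset.mem_univ j, (hWH i j).lt_of_ne' hj⟩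

theorem exists_isUnit_mul_col_eq_sum [IsStrictOrderedRing 𝕜] [Fintype l] [DecidableEq l]
    [Fintype n] {W : Matrix m l 𝕜} {H : Matrix l n 𝕜} (hH : H.rank = Fintype.card l)
    (hWH : EntrywiseNonneg (W * H)) (hW : W ≠ 0) (c : l) :
    ∃ B : Matrix l l 𝕜, IsUnit B ∧ ∀ i, (W * B) i c = ∑ j, (W * H) i j := by
  have hWv : ∀ i, (W *ᵥ (H *ᵥ 1)) i = ∑ j, (W * H) i j := fun i => by
    rw [mulVec_mulVec]
    simp [mulVec, dotProduct]
  have hv : H *ᵥ 1 ≠ 0 := fun hv => by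
    obtain ⟨i, hi⟩ : ∃ i, W i ≠ 0 := Function.ne_iff.mp hW
    simpa [← hWv, hv] using sum_mul_row_pos hH hWH hi
  obtain ⟨B, hB, hBc⟩ := exists_isUnit_col_eq hv c
  refine ⟨B, hB, fun i => ?_⟩
  rw [← hWv]
  simp only [mul_apply, hBc, mulVec, dotProduct]

theorem exists_rowsNonnegMultiplesOf_col_eq_one [IsStrictOrderedRing 𝕜] {W : Matrix m l 𝕜}
    (hW : W ≠ 0) (c : l) (hpos : ∀ i, W i ≠ 0 → 0 < W i c) :
    ∃ W' : Matrix m l 𝕜, (∀ i, W' i c = 1) ∧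
      RowsNonnegMultiplesOf W W' ∧ RowsNonnegMultiplesOf W' W := by
  classical
  obtain ⟨i₀, hi₀⟩ : ∃ i, W i ≠ 0 := by
    by_contra! h
    exact hW (funext h)
  let r : m → m := fun i => if W i = 0 then i₀ else i
  have hr : ∀ i, W (r i) ≠ 0 := fun i => by
    by_cases h : W i = 0 <;> simp [r, h, hi₀]
  refine ⟨fun i => (W (r i) c)⁻¹ • W (r i), fun i => ?_, fun i => ?_,
    fun i => ⟨r i, _, (inv_pos.mpr (hpos _ (hr i))).le, rfl⟩⟩
  · simp [(hpos _ (hr i)).ne']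
  · by_cases h : W i = 0
    · exact ⟨i, 0, le_rfl, by simp [h]⟩
    · exact ⟨i, W i c, (hpos i h).le, by simp [r, h, smul_smul, (hpos i h).ne']⟩

end Order

end Matrix

/-- Theorem 2 (P1 reduces to RESTRICTED P1): every P1 instance `(W₀, H₀)` is equivalent
to a RESTRICTED P1 instance `(W₀', H₀')` in which the last column of `W₀'` is all 1's. -/
theorem p1_equiv_restricted_p1 {m n k : ℕ} (hk : 1 ≤ k)
    (W₀ : Matrix (Fin m) (Fin k) ℝ) (H₀ : Matrix (Fin k) (Fin n) ℝ)
    (hW₀ : W₀.rank = k) (hH₀ : H₀.rank = k)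
    (hprod : ∀ i j, 0 ≤ (W₀ * H₀) i j) :
    ∃ (m' : ℕ) (_ : 1 ≤ m') (_ : m' ≤ m)
      (W₀' : Matrix (Fin m') (Fin k) ℝ) (H₀' : Matrix (Fin k) (Fin n) ℝ),
      W₀'.rank = k ∧ (∀ i, W₀' i ⟨k - 1, by omega⟩ = 1) ∧ H₀'.rank = k ∧
      (∀ i j, 0 ≤ (W₀' * H₀') i j) ∧
      ((∃ Q : Matrix (Fin k) (Fin k) ℝ, IsUnit Q ∧
          (∀ i j, 0 ≤ (W₀ * Q⁻¹) i j) ∧ (∀ i j, 0 ≤ (Q * H₀) i j)) ↔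
       (∃ Q' : Matrix (Fin k) (Fin k) ℝ, IsUnit Q' ∧
          (∀ i j, 0 ≤ (W₀' * Q'⁻¹) i j) ∧ (∀ i j, 0 ≤ (Q' * H₀') i j))) := by
  set c : Fin k := ⟨k - 1, by omega⟩
  have hW₀ne : W₀ ≠ 0 := by
    rintro rfl
    rw [rank_zero] at hW₀
    omega
  obtain ⟨B, hB, hBc⟩ :=
    exists_isUnit_mul_col_eq_sum (by rwa [Fintype.card_fin]) hprod hW₀ne c
  have hBdet := (isUnit_iff_isUnit_det B).mp hB
  have hWH₁ : W₀ * B * (B⁻¹ * H₀) = W₀ * H₀ := by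
    rw [Matrix.mul_assoc, mul_nonsing_inv_cancel_left B _ hBdet]
  have hprod₁ : EntrywiseNonneg (W₀ * B * (B⁻¹ * H₀)) := by rwa [hWH₁]
  have hW₁ : (W₀ * B).rank = k := by rwa [rank_mul_eq_left_of_isUnit_det B W₀ hBdet]
  have hH₁ : (B⁻¹ * H₀).rank = k := by
    rwa [rank_mul_eq_right_of_isUnit_det _ _ (isUnit_nonsing_inv_det B hBdet)]
  obtain ⟨W', hW'c, hW₁W', hW'W₁⟩ := exists_rowsNonnegMultiplesOf_col_eq_one
    (W := W₀ * B) (by rintro h; rw [h, rank_zero] at hW₁; omega) c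
    (fun i hi => by
      rw [hBc, ← hWH₁]
      exact sum_mul_row_pos (by rwa [Fintype.card_fin]) hprod₁ hi)
  refine ⟨m, hk.trans (hW₀ ▸ W₀.rank_le_height), le_rfl, W', B⁻¹ * H₀, ?_, hW'c, hH₁, ?_, ?_⟩
  · rw [hW'W₁.rank_eq hW₁W', hW₁]
  · exact hW'W₁.entrywiseNonneg_mul hprod₁
  · exact (hasNonnegRefactorization_mul_nonsing_inv_iff hB).symm.trans
      ⟨HasNonnegRefactorization.of_rowsNonnegMultiplesOf hW'W₁,
        HasNonnegRefactorization.of_rowsNonnegMultiplesOf hW₁W'⟩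
end

section
/- Let k ≥ 1, let W₀ ∈ ℝ^{m×k} have rank k with last column equal to the all-ones vector, let H₀ ∈ ℝ^{k×n} have rank k, and suppose W₀H₀ is entrywise nonnegative. Define S = {x₁, …, x_m} ⊂ ℝ^{k−1}, where x_i consists of the first k−1 entries of row i of W₀, and define P = {x ∈ ℝ^{k−1} : for every j = 1,…,n, Σ_{l=1}^{k−1} H₀(l,j)·x_l + H₀(k,j) ≥ 0}. Let g₁, …, g_k ∈ ℝ^{k−1} be affinely independent points, let G ∈ ℝ^{k×k} be the matrix whose i-th column is (g_i ; 1), and set Q = Gᵀ (which is invertible). Then S ⊆ convexHull{g₁,…,g_k} and convexHull{g₁,…,g_k} ⊆ P hold if and only if W₀Q⁻¹ and QH₀ are both entrywise nonnegative. -/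
/-!
Read the rows of `Q` as the homogeneous coordinates `(gᵢ ; 1)` of the vertices. A point `x`
with homogeneous coordinates `v = (x ; 1)` is `∑ wᵢ gᵢ` with `∑ wᵢ = 1` exactly when `w ᵥ* Q = v`;
so affine independence of the `gᵢ` is linear independence of the rows of `Q`, and then the only
candidate weights are `w = v ᵥ* Q⁻¹`, whence `x ∈ conv g ↔ v ᵥ* Q⁻¹ ≥ 0`. Dually, `(Q H₀)ᵢⱼ` is
the value at `gᵢ` of the `j`-th affine inequality defining `P`, and `P` is convex, so
`conv g ⊆ P` iff every vertex satisfies every inequality.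
-/

open Matrix

theorem Fin.eq_iff_init_eq_and_last_eq {K : ℕ} {α : Type*} {q r : Fin (K + 1) → α} :
    q = r ↔ Fin.init q = Fin.init r ∧ q (Fin.last K) = r (Fin.last K) :=
  ⟨by rintro rfl; simp, fun ⟨h₁, h₂⟩ => by
    rw [← Fin.snoc_init_self q, ← Fin.snoc_init_self r, h₁, h₂]⟩

theorem Matrix.vecMul_eq_iff_eq_vecMul_inv {R n : Type*} [CommRing R] [Fintype n]
    [DecidableEq n] {Q : Matrix n n R} (hQ : IsUnit Q) (w v : n → R) : w ᵥ* Q = v ↔ w = v ᵥ* Q⁻¹ := by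
  have hdet := (Matrix.isUnit_iff_isUnit_det Q).1 hQ
  constructor
  · rintro rfl; rw [vecMul_vecMul, mul_nonsing_inv _ hdet, vecMul_one]
  · rintro rfl; rw [vecMul_vecMul, nonsing_inv_mul _ hdet, vecMul_one]

theorem mem_convexHull_range_iff_exists_stdSimplex {R ι E : Type*} [Field R] [LinearOrder R]
    [IsStrictOrderedRing R] [Fintype ι] [AddCommGroup E] [Module R E] (v : ι → E) (x : E) :
    x ∈ convexHull R (Set.range v) ↔ ∃ w ∈ stdSimplex R ι, ∑ i, w i • v i = x := by
  classical
  have hv : v = Fintype.linearCombination R v ∘ fun i => Pi.single i 1 := by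
    funext i; simp [Fintype.linearCombination_apply_single]
  rw [hv, Set.range_comp, ← LinearMap.image_convexHull, convexHull_rangle_single_eq_stdSimplex]
  simp [Fintype.linearCombination_apply]

theorem convex_setOf_forall_nonneg_sum_mul_add {R κ ι : Type*} [Field R] [LinearOrder R]
    [IsStrictOrderedRing R] [Fintype κ] (A : κ → ι → R) (b : ι → R) :
    Convex R {x : κ → R | ∀ j, 0 ≤ (∑ l, A l j * x l) + b j} := by
  rw [Set.ofPred_forall]
  refine convex_iInter fun j => ?_
  have hlin : IsLinearMap R fun x : κ → R => ∑ l, A l j * x l :=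
    ⟨fun x y => by simp [mul_add, Finset.sum_add_distrib],
     fun c x => by simp [Finset.mul_sum, mul_left_comm]⟩
  simpa only [neg_le_iff_add_nonneg] using convex_halfSpace_ge hlin (-b j)

section Homogeneous

variable {K : ℕ} {R ι ι' : Type*}

section CommRing

variable [CommRing R]

theorem init_vecMul [Fintype ι] (w : ι → R) (Q : Matrix ι (Fin (K + 1)) R) :
    Fin.init (w ᵥ* Q) = ∑ i, w i • Fin.init (Q i) := by
  ext l; simp [Fin.init, vecMul, dotProduct]

theorem vecMul_last_of_last_eq_one [Fintype ι] {Q : Matrix ι (Fin (K + 1)) R}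
    (hQ : ∀ i, Q i (Fin.last K) = 1) (w : ι → R) : (w ᵥ* Q) (Fin.last K) = ∑ i, w i := by
  simp [vecMul, dotProduct, hQ]

theorem vecMul_apply_of_last_eq_one {q : Fin (K + 1) → R} (hq : q (Fin.last K) = 1)
    (H : Matrix (Fin (K + 1)) ι R) (j : ι) :
    (q ᵥ* H) j = (∑ l, H (Fin.castSucc l) j * Fin.init q l) + H (Fin.last K) j := by
  simp [vecMul, dotProduct, Fin.sum_univ_castSucc, hq, Fin.init, mul_comm]

theorem linearIndependent_of_affineIndependent_init [Fintype ι] {Q : Matrix ι (Fin (K + 1)) R}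
    (hQ : ∀ i, Q i (Fin.last K) = 1) (hg : AffineIndependent R fun i => Fin.init (Q i)) :
    LinearIndependent R Q := by
  refine Fintype.linearIndependent_iff.2 fun c hc i => ?_
  rw [← vecMul_eq_sum] at hc
  have hsum : ∑ i, c i = 0 := by rw [← vecMul_last_of_last_eq_one hQ, hc]; rfl
  have hcomb : ∑ i, c i • Fin.init (Q i) = 0 := by rw [← init_vecMul, hc]; rfl
  exact hg.eq_zero_of_sum_eq_zero hsum hcomb i (Finset.mem_univ i)

end CommRing

variable [Field R] [LinearOrder R] [IsStrictOrderedRing R]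

theorem init_mem_convexHull_iff_nonneg_vecMul_inv {Q : Matrix (Fin (K + 1)) (Fin (K + 1)) R}
    (hQ : ∀ i, Q i (Fin.last K) = 1) (hQu : IsUnit Q) {v : Fin (K + 1) → R}
    (hv : v (Fin.last K) = 1) :
    Fin.init v ∈ convexHull R (Set.range fun i => Fin.init (Q i)) ↔ ∀ j, 0 ≤ (v ᵥ* Q⁻¹) j := by
  simp only [mem_convexHull_range_iff_exists_stdSimplex, stdSimplex, Set.mem_ofPred_eq, and_assoc,
    ← init_vecMul]
  have key : ∀ w, (∑ i, w i = 1 ∧ Fin.init (w ᵥ* Q) = Fin.init v) ↔ w = v ᵥ* Q⁻¹ := fun w => by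
    rw [← vecMul_last_of_last_eq_one hQ, ← hv, and_comm, ← Fin.eq_iff_init_eq_and_last_eq,
      Matrix.vecMul_eq_iff_eq_vecMul_inv hQu]
  simp only [key, exists_eq_right]

theorem convexHull_init_subset_iff [Fintype ι] {Q : Matrix ι (Fin (K + 1)) R}
    (hQ : ∀ i, Q i (Fin.last K) = 1) (H : Matrix (Fin (K + 1)) ι' R) :
    convexHull R (Set.range fun i => Fin.init (Q i)) ⊆
        {x | ∀ j, 0 ≤ (∑ l, H (Fin.castSucc l) j * x l) + H (Fin.last K) j} ↔
      ∀ i j, 0 ≤ (Q * H) i j := by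
  rw [(convex_setOf_forall_nonneg_sum_mul_add (fun l j => H (Fin.castSucc l) j)
    (H (Fin.last K))).convexHull_subset_iff, Set.range_subset_iff]
  simp only [Set.mem_ofPred_eq, mul_apply_eq_vecMul, vecMul_apply_of_last_eq_one (hQ _)]

end Homogeneous

theorem intermediate_simplex_correspondence_general {m n K : ℕ}
    (W₀ : Matrix (Fin m) (Fin (K + 1)) ℝ) (H₀ : Matrix (Fin (K + 1)) (Fin n) ℝ)
    (hW₀last : ∀ i, W₀ i (Fin.last K) = 1)
    (S : Set (Fin K → ℝ)) (hS : S = Set.range (fun i l => W₀ i (Fin.castSucc l)))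
    (P : Set (Fin K → ℝ))
    (hP : P = {x | ∀ j, 0 ≤ (∑ l, H₀ (Fin.castSucc l) j * x l) + H₀ (Fin.last K) j})
    (g : Fin (K + 1) → (Fin K → ℝ)) (hg : AffineIndependent ℝ g)
    (G : Matrix (Fin (K + 1)) (Fin (K + 1)) ℝ)
    (hG : G = Matrix.of fun l i => Fin.lastCases (1 : ℝ) (fun l' => g i l') l)
    (Q : Matrix (Fin (K + 1)) (Fin (K + 1)) ℝ) (hQ : Q = Gᵀ) :
    IsUnit Q ∧
    ((S ⊆ convexHull ℝ (Set.range g) ∧ convexHull ℝ (Set.range g) ⊆ P) ↔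
      ((∀ i j, 0 ≤ (W₀ * Q⁻¹) i j) ∧ (∀ i j, 0 ≤ (Q * H₀) i j))) := by
  have hQg : (fun i => Fin.init (Q i)) = g := by
    funext i l; simp [hQ, hG, Fin.init]
  have hQlast : ∀ i, Q i (Fin.last K) = 1 := by simp [hQ, hG]
  have hQu : IsUnit Q := linearIndependent_rows_iff_isUnit.1 <|
    linearIndependent_of_affineIndependent_init hQlast (hQg ▸ hg)
  refine ⟨hQu, and_congr ?_ ?_⟩
  · rw [hS, ← hQg, Set.range_subset_iff]
    simp only [mul_apply_eq_vecMul]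
    exact forall_congr' fun i => init_mem_convexHull_iff_nonneg_vecMul_inv hQlast hQu (hW₀last i)
  · rw [hP, ← hQg]
    exact convexHull_init_subset_iff hQlast H₀

/-- The explicit correspondence in Theorem 3 between simplices `T` with `S ⊆ T ⊆ P`
and solutions `Q = Gᵀ` of the RESTRICTED P1 instance `(W₀, H₀)`.  Here `k = K + 1 ≥ 1`,
`S` consists of the first `k - 1` entries of the rows of `W₀`, `P` is the polyhedron
determined by `H₀`, the `g i` are affinely independent points of `ℝ^{k-1}`, and `G`
is the matrix whose `i`-th column is `(g i ; 1)`. -/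
theorem intermediate_simplex_correspondence {m n K : ℕ}
    (W₀ : Matrix (Fin m) (Fin (K + 1)) ℝ) (H₀ : Matrix (Fin (K + 1)) (Fin n) ℝ)
    (hW₀rank : W₀.rank = K + 1) (hW₀last : ∀ i, W₀ i (Fin.last K) = 1)
    (hH₀rank : H₀.rank = K + 1) (hprod : ∀ i j, 0 ≤ (W₀ * H₀) i j)
    (S : Set (Fin K → ℝ)) (hS : S = Set.range (fun i l => W₀ i (Fin.castSucc l)))
    (P : Set (Fin K → ℝ))
    (hP : P = {x | ∀ j, 0 ≤ (∑ l, H₀ (Fin.castSucc l) j * x l) + H₀ (Fin.last K) j})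
    (g : Fin (K + 1) → (Fin K → ℝ)) (hg : AffineIndependent ℝ g)
    (G : Matrix (Fin (K + 1)) (Fin (K + 1)) ℝ)
    (hG : G = Matrix.of fun l i => Fin.lastCases (1 : ℝ) (fun l' => g i l') l)
    (Q : Matrix (Fin (K + 1)) (Fin (K + 1)) ℝ) (hQ : Q = Gᵀ) :
    IsUnit Q ∧
    ((S ⊆ convexHull ℝ (Set.range g) ∧ convexHull ℝ (Set.range g) ⊆ P) ↔
      ((∀ i j, 0 ≤ (W₀ * Q⁻¹) i j) ∧ (∀ i j, 0 ≤ (Q * H₀) i j))) :=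
  intermediate_simplex_correspondence_general W₀ H₀ hW₀last S hS P hP g hg G hG Q hQ
end

section
/- Every m×n real matrix A with all entries nonnegative and rank exactly 2 admits an exact nonnegative factorization: there exist entrywise nonnegative matrices W ∈ ℝ^{m×2} and H ∈ ℝ^{2×n} such that A = WH. -/
/-!
Normalise every nonzero column of `A` to have entry sum `1`. The normalised columns lie in the
column space of `A`, of dimension `2`, and in the affine hyperplane `∑ i, x i = 1`, which does not
contain `0`; hence they are collinear. Finitely many collinear points lie on the segment between
the two extreme ones, so every column of `A` is a nonnegative combination of these two
(nonnegative) normalised columns, which are the columns of `W`.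
-/

open Module Matrix

theorem Collinear.exists_subset_segment {E : Type*} [AddCommGroup E] [Module ℝ E] {s : Set E}
    (hs : Collinear ℝ s) (hfin : s.Finite) (hne : s.Nonempty) :
    ∃ p ∈ s, ∃ q ∈ s, s ⊆ segment ℝ p q := by
  obtain ⟨p₀, hp₀⟩ := hne
  obtain ⟨v, hv⟩ := (collinear_iff_of_mem hp₀).1 hs
  choose r hr using hv
  simp only [vadd_eq_add] at hr
  let line : ℝ →ᵃ[ℝ] E := AffineMap.lineMap p₀ (v + p₀)
  have hline : ∀ t, line t = t • v + p₀ := fun t => by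
    simp [line, AffineMap.lineMap_apply]
  have : Finite s := hfin
  have : Nonempty s := ⟨⟨p₀, hp₀⟩⟩
  obtain ⟨⟨p, hp⟩, hmin⟩ := Finite.exists_min fun x : s => r x x.2
  obtain ⟨⟨q, hq⟩, hmax⟩ := Finite.exists_max fun x : s => r x x.2
  refine ⟨p, hp, q, hq, fun x hx => ?_⟩
  have hpq : segment ℝ p q = line '' segment ℝ (r p hp) (r q hq) := by
    rw [image_segment, hline, hline, ← hr p hp, ← hr q hq]
  rw [hpq, segment_eq_Icc (hmin ⟨x, hx⟩ |>.trans (hmax ⟨x, hx⟩))]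
  exact ⟨r x hx, ⟨hmin ⟨x, hx⟩, hmax ⟨x, hx⟩⟩, by rw [hline, ← hr x hx]⟩

theorem collinear_of_finrank_le_two_of_map_eq_one {K E : Type*} [Field K] [AddCommGroup E]
    [Module K E] (W : Submodule K E) [FiniteDimensional K W] (hW : finrank K W ≤ 2)
    (f : E →ₗ[K] K)
    {s : Set E} (hsW : s ⊆ W) (hs : ∀ x ∈ s, f x = 1) : Collinear K s := by
  rcases s.eq_empty_or_nonempty with rfl | ⟨x₀, hx₀⟩
  · exact collinear_empty K E
  have hspan : vectorSpan K s ≤ W ⊓ LinearMap.ker f := by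
    rw [vectorSpan_def, Submodule.span_le]
    rintro _ ⟨x, hx, y, hy, rfl⟩
    exact ⟨W.sub_mem (hsW hx) (hsW hy), by simp [hs x hx, hs y hy]⟩
  have hlt : W ⊓ LinearMap.ker f < W :=
    inf_lt_left.2 fun h => by simpa [hs x₀ hx₀] using h (hsW hx₀)
  have := Submodule.finiteDimensional_of_le (hspan.trans inf_le_left)
  rw [collinear_iff_finrank_le_one]
  have := Submodule.finrank_lt_finrank_of_lt hlt
  have := Submodule.finrank_mono hspan
  omega

theorem exists_two_nonneg_generators_of_finrank_span_le_two {ι κ : Type*} [Fintype ι] [Finite κ]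
    (x : κ → ι → ℝ) (hx : ∀ j, 0 ≤ x j)
    (hrank : finrank ℝ (Submodule.span ℝ (Set.range x)) ≤ 2) :
    ∃ p q : ι → ℝ, 0 ≤ p ∧ 0 ≤ q ∧
      ∀ j, ∃ a b : ℝ, 0 ≤ a ∧ 0 ≤ b ∧ x j = a • p + b • q := by
  let sum : (ι → ℝ) →ₗ[ℝ] ℝ := ∑ i, LinearMap.proj i
  have hsum : ∀ y, sum y = ∑ i, y i := fun y => by simp [sum]
  have hsum_pos : ∀ j, x j ≠ 0 → 0 < sum (x j) := fun j hj => by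
    obtain ⟨i, hi⟩ := Function.ne_iff.1 hj
    rw [hsum]
    exact Finset.sum_pos' (fun i _ => hx j i) ⟨i, Finset.mem_univ i, (hx j i).lt_of_ne' hi⟩
  let c j := (sum (x j))⁻¹ • x j
  have hc_nonneg : ∀ j, 0 ≤ c j := fun j =>
    smul_nonneg (inv_nonneg.2 (by rw [hsum]; exact Finset.sum_nonneg fun i _ => hx j i)) (hx j)
  have hx_eq : ∀ j, x j ≠ 0 → x j = sum (x j) • c j := fun j hj => by
    simp [c, smul_smul, (hsum_pos j hj).ne']
  by_cases hzero : ∀ j, x j = 0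
  · exact ⟨0, 0, le_rfl, le_rfl, fun j => ⟨0, 0, le_rfl, le_rfl, by simp [hzero j]⟩⟩
  push Not at hzero
  obtain ⟨j₀, hj₀⟩ := hzero
  have hcol : Collinear ℝ (c '' {j | x j ≠ 0}) := by
    refine collinear_of_finrank_le_two_of_map_eq_one _ hrank sum ?_ ?_
    · rintro _ ⟨j, -, rfl⟩
      exact Submodule.smul_mem _ _ (Submodule.subset_span (Set.mem_range_self j))
    · rintro _ ⟨j, hj, rfl⟩
      simp [c, (hsum_pos j hj).ne']
  obtain ⟨_, ⟨j₁, -, rfl⟩, _, ⟨j₂, -, rfl⟩, hseg⟩ :=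
    hcol.exists_subset_segment (Set.toFinite _) ⟨c j₀, j₀, hj₀, rfl⟩
  refine ⟨c j₁, c j₂, hc_nonneg j₁, hc_nonneg j₂, fun j => ?_⟩
  by_cases hj : x j = 0
  · exact ⟨0, 0, le_rfl, le_rfl, by simp [hj]⟩
  obtain ⟨a, b, ha, hb, -, hab⟩ := hseg ⟨j, hj, rfl⟩
  refine ⟨sum (x j) * a, sum (x j) * b, mul_nonneg (hsum_pos j hj).le ha,
    mul_nonneg (hsum_pos j hj).le hb, ?_⟩
  rw [mul_smul, mul_smul, ← smul_add, hab]
  exact hx_eq j hj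

/-- Every entrywise nonnegative real matrix of rank exactly 2 admits an exact
nonnegative matrix factorization with inner dimension 2. -/
theorem rank_two_exact_nmf {m n : ℕ}
    (A : Matrix (Fin m) (Fin n) ℝ) (hA : ∀ i j, 0 ≤ A i j) (hrank : A.rank = 2) :
    ∃ (W : Matrix (Fin m) (Fin 2) ℝ) (H : Matrix (Fin 2) (Fin n) ℝ),
      (∀ i j, 0 ≤ W i j) ∧ (∀ i j, 0 ≤ H i j) ∧ A = W * H := by
  obtain ⟨p, q, hp, hq, hcone⟩ := exists_two_nonneg_generators_of_finrank_span_le_two A.col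
    (fun j i => hA i j) (by rw [← rank_eq_finrank_span_cols, hrank])
  choose a b ha hb hab using hcone
  refine ⟨of fun i k => ![p i, q i] k, of fun k j => ![a j, b j] k,
    fun i => Fin.forall_fin_two.2 ⟨hp i, hq i⟩, Fin.forall_fin_two.2 ⟨ha, hb⟩, ?_⟩
  ext i j
  simpa [mul_apply, mul_comm] using congrFun (hab j) i
end

section
/- Let P = [0,1] × [0,1] ⊂ ℝ² and S = {(0, 1/2), (1, 1/2), (1/2, 1/4), (1/2, 3/4)}. If g₁, g₂, g₃ ∈ ℝ² satisfy S ⊆ convexHull{g₁, g₂, g₃} ⊆ P, then convexHull{g₁, g₂, g₃} equals either T₀ = convexHull{(0,0), (0,1), (1, 1/2)} or T₁ = convexHull{(1,0), (1,1), (0, 1/2)}. -/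
/-!
A point of a convex hull lying on a supporting hyperplane is a convex combination of the
generators on that hyperplane. The triangle lies in the square and contains `(0, 1/2)` and
`(1, 1/2)`, so it has a vertex on the side `x = 0` and one on the side `x = 1`.
If the third vertex lies strictly between these sides, the first two vertices are forced to be
`(0, 1/2)` and `(1, 1/2)`, and a triangle with that base cannot contain points on both sides of
it such as `(1/2, 1/4)` and `(1/2, 3/4)`. If the third vertex lies on `x = 0`, the vertex on
`x = 1` must be `(1, 1/2)`; since `(1/2, 1/4)` and `(1/2, 3/4)` are its midpoints with the
corners `(0, 0)` and `(0, 1)`, the lines through them support the triangle, which forces the two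
vertices on `x = 0` to be those corners. The case `x = 1` is the mirror image.
-/

open Set

section SupportingHyperplane

variable {𝕜 E : Type*} [Field 𝕜] [LinearOrder 𝕜] [IsStrictOrderedRing 𝕜]
  [AddCommGroup E] [Module 𝕜 E] {s : Set E} {f : E →ₗ[𝕜] 𝕜} {m : 𝕜} {p : E}

theorem apply_le_of_mem_convexHull (hs : ∀ x ∈ s, f x ≤ m) (hp : p ∈ convexHull 𝕜 s) :
    f p ≤ m :=
  convexHull_min hs (convex_halfSpace_le f.isLinear m) hp

theorem mem_convexHull_sep_of_le_of_eq (hs : ∀ x ∈ s, f x ≤ m) (hp : p ∈ convexHull 𝕜 s)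
    (hfp : f p = m) : p ∈ convexHull 𝕜 {x ∈ s | f x = m} := by
  set F := {x ∈ s | f x = m}
  have hF : ∀ y ∈ convexHull 𝕜 F, f y = m := fun y hy =>
    convexHull_min (fun x hx => hx.2) (convex_hyperplane f.isLinear m) hy
  -- `s` lies in the convex set `{f < m} ∪ convexHull F`: a combination with positive weights of
  -- points with `f ≤ m` reaches `f = m` only if both points do.
  have hK : Convex 𝕜 ({x | f x < m} ∪ convexHull 𝕜 F) := by
    refine convex_iff_forall_pos.2 fun x hx y hy a b ha hb hab => ?_
    have hcomb : a * m + b * m = m := by rw [← add_mul, hab, one_mul]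
    rcases hx with hx | hx <;> rcases hy with hy | hy
    · exact Or.inl (convex_halfSpace_lt f.isLinear m hx hy ha.le hb.le hab)
    · refine Or.inl ?_
      simp only [mem_ofPred, map_add, map_smul, smul_eq_mul, hF y hy] at hx ⊢
      linarith [mul_lt_mul_of_pos_left hx ha]
    · refine Or.inl ?_
      simp only [mem_ofPred, map_add, map_smul, smul_eq_mul, hF x hx] at hy ⊢
      linarith [mul_lt_mul_of_pos_left hy hb]
    · exact Or.inr (convex_convexHull 𝕜 F hx hy ha.le hb.le hab)
  have hsK : s ⊆ {x | f x < m} ∪ convexHull 𝕜 F := fun x hx =>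
    (hs x hx).lt_or_eq.imp id fun h => subset_convexHull 𝕜 F ⟨hx, h⟩
  exact (convexHull_min hsK hK hp).resolve_left hfp.not_lt

theorem exists_mem_eq_of_le_of_mem_convexHull (hs : ∀ x ∈ s, f x ≤ m)
    (hp : p ∈ convexHull 𝕜 s) (hfp : f p = m) : ∃ x ∈ s, f x = m :=
  convexHull_nonempty_iff.1 ⟨p, mem_convexHull_sep_of_le_of_eq hs hp hfp⟩

theorem eq_of_mem_convexHull_triple {q x y : E} (hq : f q ≤ m) (hx : f x < m) (hy : f y < m)
    (hp : p ∈ convexHull 𝕜 {q, x, y}) (hfp : f p = m) : p = q := by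
  have hface : {z ∈ ({q, x, y} : Set E) | f z = m} ⊆ {q} := by
    rintro z ⟨rfl | rfl | rfl, hz⟩
    · rfl
    · exact absurd hz hx.ne
    · exact absurd hz hy.ne
  simpa using convexHull_mono hface <|
    mem_convexHull_sep_of_le_of_eq (by simp [hq, hx.le, hy.le]) hp hfp

theorem apply_eq_or_apply_eq_of_mem_convexHull_triple {q x y : E} (hq : f q ≤ m)
    (hx : f x ≤ m) (hy : f y ≤ m) (hp : p ∈ convexHull 𝕜 {q, x, y}) (hfp : f p = m)
    (hpq : p ≠ q) : f x = m ∨ f y = m := by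
  by_contra! h
  exact hpq (eq_of_mem_convexHull_triple hq (hx.lt_of_ne h.1) (hy.lt_of_ne h.2) hp hfp)

end SupportingHyperplane

theorem exists_eq_insert_insert {α : Type*} {x y z a b : α} (ha : a ∈ ({x, y, z} : Set α))
    (hb : b ∈ ({x, y, z} : Set α)) (hab : a ≠ b) : ∃ c, ({x, y, z} : Set α) = {a, b, c} := by
  rcases ha with ha | ha | ha <;> rcases hb with hb | hb | hb <;> subst a b
  any_goals exact absurd rfl hab
  any_goals exact ⟨z, rfl⟩
  all_goals first
    | (refine ⟨z, ?_⟩; ext; simp only [mem_insert_iff, mem_singleton_iff]; tauto)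
    | (refine ⟨y, ?_⟩; ext; simp only [mem_insert_iff, mem_singleton_iff]; tauto)
    | (refine ⟨x, ?_⟩; ext; simp only [mem_insert_iff, mem_singleton_iff]; tauto)

def planeForm (u v : ℝ) : ℝ × ℝ →ₗ[ℝ] ℝ :=
  u • LinearMap.fst ℝ ℝ ℝ + v • LinearMap.snd ℝ ℝ ℝ

@[simp]
theorem planeForm_apply (u v : ℝ) (x : ℝ × ℝ) : planeForm u v x = u * x.1 + v * x.2 := rfl

theorem vertices_eq_of_base_on_left {r s t : ℝ} (hs : s ∈ Icc (0 : ℝ) 1) (ht : t ∈ Icc (0 : ℝ) 1)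
    (hB : ((1 : ℝ), (1/2 : ℝ)) ∈ convexHull ℝ {((1 : ℝ), r), (0, s), (0, t)})
    (hC : ((1/2 : ℝ), (1/4 : ℝ)) ∈ convexHull ℝ {((1 : ℝ), r), (0, s), (0, t)})
    (hD : ((1/2 : ℝ), (3/4 : ℝ)) ∈ convexHull ℝ {((1 : ℝ), r), (0, s), (0, t)}) :
    ({((1 : ℝ), r), (0, s), (0, t)} : Set (ℝ × ℝ)) = {(0, 0), (0, 1), (1, 1/2)} := by
  obtain rfl : r = 1/2 := by
    simpa using (eq_of_mem_convexHull_triple (f := planeForm 1 0) (m := 1)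
      (by simp) (by simp) (by simp) hB (by simp)).symm
  -- `C` and `D` are the midpoints of `B = (1, 1/2)` and the corners `(0, 0)`, `(0, 1)`.
  have h0 : s = 0 ∨ t = 0 := by
    simpa using apply_eq_or_apply_eq_of_mem_convexHull_triple (f := planeForm (1/2) (-1))
      (m := 0) (by norm_num) (by simpa using hs.1) (by simpa using ht.1) hC (by norm_num)
      (by norm_num)
  have h1 : s = 1 ∨ t = 1 := by
    simpa using apply_eq_or_apply_eq_of_mem_convexHull_triple (f := planeForm (1/2) 1)
      (m := 1) (by norm_num) (by simpa using hs.2) (by simpa using ht.2) hD (by norm_num)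
      (by norm_num)
  rcases h0 with rfl | rfl <;> rcases h1 with h | h <;> norm_num at h <;> subst h <;>
    ext <;> simp only [mem_insert_iff, mem_singleton_iff] <;> tauto

theorem vertices_eq_of_base_on_right {r s t : ℝ} (hs : s ∈ Icc (0 : ℝ) 1)
    (ht : t ∈ Icc (0 : ℝ) 1)
    (hA : ((0 : ℝ), (1/2 : ℝ)) ∈ convexHull ℝ {((0 : ℝ), r), (1, s), (1, t)})
    (hC : ((1/2 : ℝ), (1/4 : ℝ)) ∈ convexHull ℝ {((0 : ℝ), r), (1, s), (1, t)})
    (hD : ((1/2 : ℝ), (3/4 : ℝ)) ∈ convexHull ℝ {((0 : ℝ), r), (1, s), (1, t)}) :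
    ({((0 : ℝ), r), (1, s), (1, t)} : Set (ℝ × ℝ)) = {(1, 0), (1, 1), (0, 1/2)} := by
  obtain rfl : r = 1/2 := by
    simpa using (eq_of_mem_convexHull_triple (f := planeForm (-1) 0) (m := 0)
      (by simp) (by simp) (by simp) hA (by simp)).symm
  -- `C` and `D` are the midpoints of `A = (0, 1/2)` and the corners `(1, 0)`, `(1, 1)`.
  have h0 : s = 0 ∨ t = 0 := by
    simpa using apply_eq_or_apply_eq_of_mem_convexHull_triple (f := planeForm (-1/2) (-1))
      (m := -1/2) (by norm_num) (by simpa using hs.1) (by simpa using ht.1) hC (by norm_num)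
      (by norm_num)
  have h1 : s = 1 ∨ t = 1 := by
    have := apply_eq_or_apply_eq_of_mem_convexHull_triple (f := planeForm (-1/2) 1)
      (m := 1/2) (by norm_num) (by norm_num; linarith [hs.2]) (by norm_num; linarith [ht.2]) hD
      (by norm_num) (by norm_num)
    simp only [planeForm_apply] at this
    exact this.imp (fun h => by linarith) (fun h => by linarith)
  rcases h0 with rfl | rfl <;> rcases h1 with h | h <;> norm_num at h <;> subst h <;>
    ext <;> simp only [mem_insert_iff, mem_singleton_iff] <;> tauto

theorem false_of_vertex_fst_mem_Ioo {r s t u : ℝ} (hu : u ∈ Ioo (0 : ℝ) 1)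
    (hA : ((0 : ℝ), (1/2 : ℝ)) ∈ convexHull ℝ {((0 : ℝ), s), (1, r), (u, t)})
    (hB : ((1 : ℝ), (1/2 : ℝ)) ∈ convexHull ℝ {((0 : ℝ), s), (1, r), (u, t)})
    (hC : ((1/2 : ℝ), (1/4 : ℝ)) ∈ convexHull ℝ {((0 : ℝ), s), (1, r), (u, t)})
    (hD : ((1/2 : ℝ), (3/4 : ℝ)) ∈ convexHull ℝ {((0 : ℝ), s), (1, r), (u, t)}) : False := by
  obtain rfl : s = 1/2 := by
    simpa using (eq_of_mem_convexHull_triple (f := planeForm (-1) 0) (m := 0)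
      (by simp) (by simp) (by simpa using hu.1) hA (by simp)).symm
  obtain rfl : r = 1/2 := by
    rw [insert_comm] at hB
    simpa using (eq_of_mem_convexHull_triple (f := planeForm 1 0) (m := 1)
      (by simp) (by simp) (by simpa using hu.2) hB (by simp)).symm
  -- `C` and `D` lie strictly on either side of the line `y = 1/2` through the other two vertices.
  rcases le_total t (1/2) with ht | ht
  · have := apply_le_of_mem_convexHull (f := planeForm 0 1) (m := 1/2) (by simpa using ht) hD
    norm_num at this
  · have := apply_le_of_mem_convexHull (f := planeForm 0 (-1)) (m := -1/2) (by norm_num [ht]) hC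
    norm_num at this

theorem convexHull_eq_of_fst_eq_zero_of_fst_eq_one {s r u t : ℝ}
    (hS : {(0, 1/2), (1, 1/2), (1/2, 1/4), (1/2, 3/4)} ⊆
      convexHull ℝ {((0 : ℝ), s), (1, r), (u, t)})
    (hP : convexHull ℝ {((0 : ℝ), s), (1, r), (u, t)} ⊆ Icc (0 : ℝ) 1 ×ˢ Icc (0 : ℝ) 1) :
    convexHull ℝ {((0 : ℝ), s), (1, r), (u, t)} =
        convexHull ℝ {((0 : ℝ), (0 : ℝ)), (0, 1), (1, 1/2)} ∨
      convexHull ℝ {((0 : ℝ), s), (1, r), (u, t)} =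
        convexHull ℝ {((1 : ℝ), (0 : ℝ)), (1, 1), (0, 1/2)} := by
  have hV : ∀ x ∈ ({((0 : ℝ), s), (1, r), (u, t)} : Set (ℝ × ℝ)),
      x ∈ Icc (0 : ℝ) 1 ×ˢ Icc (0 : ℝ) 1 := fun x hx => hP (subset_convexHull ℝ _ hx)
  simp only [forall_mem_insert, mem_singleton_iff, forall_eq, mem_prod, mem_Icc] at hV
  obtain ⟨⟨-, hs⟩, ⟨-, hr⟩, ⟨hu0, hu1⟩, ht⟩ := hV
  have hA := hS (by simp : ((0 : ℝ), (1/2 : ℝ)) ∈ _)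
  have hB := hS (by simp : ((1 : ℝ), (1/2 : ℝ)) ∈ _)
  have hC := hS (by simp : ((1/2 : ℝ), (1/4 : ℝ)) ∈ _)
  have hD := hS (by simp : ((1/2 : ℝ), (3/4 : ℝ)) ∈ _)
  rcases hu0.eq_or_lt with rfl | hu0
  · rw [insert_comm] at hB hC hD ⊢
    exact Or.inl (congrArg _ (vertices_eq_of_base_on_left hs ht hB hC hD))
  rcases hu1.lt_or_eq with hu1 | rfl
  · exact (false_of_vertex_fst_mem_Ioo ⟨hu0, hu1⟩ hA hB hC hD).elim
  · exact Or.inr (congrArg _ (vertices_eq_of_base_on_right hr ht hA hC hD))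

/-- The gadget lemma (Lemma 1), uniqueness part: any triangle sandwiched between the
four-point set `S` and the unit square `P` equals `T₀` or `T₁`. -/
theorem gadget_uniqueness
    (P : Set (ℝ × ℝ)) (hP : P = Set.Icc (0 : ℝ) 1 ×ˢ Set.Icc (0 : ℝ) 1)
    (S : Set (ℝ × ℝ)) (hS : S = {(0, 1/2), (1, 1/2), (1/2, 1/4), (1/2, 3/4)})
    (g₁ g₂ g₃ : ℝ × ℝ)
    (hST : S ⊆ convexHull ℝ {g₁, g₂, g₃})
    (hTP : convexHull ℝ {g₁, g₂, g₃} ⊆ P) :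
    convexHull ℝ {g₁, g₂, g₃} = convexHull ℝ {((0 : ℝ), (0 : ℝ)), (0, 1), (1, 1/2)} ∨
    convexHull ℝ {g₁, g₂, g₃} = convexHull ℝ {((1 : ℝ), (0 : ℝ)), (1, 1), (0, 1/2)} := by
  subst hP hS
  have hV : ∀ x ∈ ({g₁, g₂, g₃} : Set (ℝ × ℝ)), x.1 ∈ Icc (0 : ℝ) 1 := fun x hx =>
    (hTP (subset_convexHull ℝ _ hx)).1
  obtain ⟨⟨a, s⟩, haV, ha⟩ := exists_mem_eq_of_le_of_mem_convexHull (f := planeForm (-1) 0)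
    (m := 0) (fun x hx => by simpa using (hV x hx).1) (hST (by simp : ((0 : ℝ), (1/2 : ℝ)) ∈ _))
    (by simp)
  obtain ⟨⟨b, r⟩, hbV, hb⟩ := exists_mem_eq_of_le_of_mem_convexHull (f := planeForm 1 0)
    (m := 1) (fun x hx => by simpa using (hV x hx).2) (hST (by simp : ((1 : ℝ), (1/2 : ℝ)) ∈ _))
    (by simp)
  obtain rfl : a = 0 := by simpa using ha
  obtain rfl : b = 1 := by simpa using hb
  obtain ⟨⟨u, t⟩, hg⟩ := exists_eq_insert_insert haV hbV (by simp)
  rw [hg] at hST hTP ⊢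
  exact convexHull_eq_of_fst_eq_zero_of_fst_eq_one hST hTP
end

section
/- Let P ⊆ ℝ^d be a convex set, let S ⊂ ℝ^d be a finite set, and let v₁, …, v_d ∈ P. Then the set { v ∈ ℝ^d : S ⊆ convexHull{v₁,…,v_d, v} and convexHull{v₁,…,v_d, v} ⊆ P } is convex. -/
/-!
A point `s` lies in `conv ({v} ∪ R)` iff either `s ∈ conv R`, or `v` lies in the cone with apex `s`
spanned by `s - conv R`, i.e. `v - s ∈ c • (s - conv R)` for some `c ≥ 0`. Either way the set of
such `v` is convex, and so is the intersection of these sets over `s ∈ S`. The containment in `P`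
only constrains `v` to lie in `P`.
-/

open Set Pointwise

section ConvexJoin

variable {𝕜 E : Type*} [Field 𝕜] [LinearOrder 𝕜] [IsStrictOrderedRing 𝕜]
  [AddCommGroup E] [Module 𝕜 E]

theorem convex_setOf_sub_mem_nonneg_smul {D : Set E} (hD : Convex 𝕜 D) (s : E) :
    Convex 𝕜 {v | ∃ c : 𝕜, 0 ≤ c ∧ v - s ∈ c • D} := by
  rintro v₁ ⟨c₁, hc₁, hv₁⟩ v₂ ⟨c₂, hc₂, hv₂⟩ t u ht hu htu
  refine ⟨t * c₁ + u * c₂, by positivity, ?_⟩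
  have hsplit : t • v₁ + u • v₂ - s = t • (v₁ - s) + u • (v₂ - s) := by
    calc t • v₁ + u • v₂ - s = t • v₁ + u • v₂ - (t + u) • s := by rw [htu, one_smul]
      _ = t • (v₁ - s) + u • (v₂ - s) := by rw [add_smul, smul_sub, smul_sub]; abel
  rw [hsplit, hD.add_smul (by positivity) (by positivity), mul_smul, mul_smul]
  exact add_mem_add (smul_mem_smul_set hv₁) (smul_mem_smul_set hv₂)

theorem mem_convexJoin_singleton_left_iff_of_notMem {C : Set E} {s v : E} (hs : s ∉ C) :
    s ∈ convexJoin 𝕜 {v} C ↔ ∃ c : 𝕜, 0 ≤ c ∧ v - s ∈ c • ({s} - C) := by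
  simp only [convexJoin_singleton_left, mem_iUnion₂, mem_smul_set, singleton_sub, mem_image]
  constructor
  · rintro ⟨r, hr, a, b, ha, hb, hab, rfl⟩
    have ha0 : a ≠ 0 := by
      rintro rfl
      rw [zero_add] at hab
      simp [hab, hr] at hs
    refine ⟨b / a, by positivity, _, ⟨r, hr, rfl⟩, ?_⟩
    obtain rfl : b = 1 - a := eq_sub_of_add_eq' hab
    match_scalars <;> field_simp; ring
  · rintro ⟨c, hc, _, ⟨r, hr, rfl⟩, hv⟩
    refine ⟨r, hr, 1 / (1 + c), c / (1 + c), by positivity, by positivity, by field_simp, ?_⟩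
    rw [sub_eq_iff_eq_add.mp hv.symm]
    match_scalars <;> field_simp <;> ring

theorem convex_setOf_mem_convexJoin_singleton_left {C : Set E} (hC : Convex 𝕜 C) (s : E) :
    Convex 𝕜 {v | s ∈ convexJoin 𝕜 {v} C} := by
  by_cases hs : s ∈ C
  · have hall : {v | s ∈ convexJoin 𝕜 {v} C} = univ :=
      eq_univ_of_forall fun v ↦ mem_convexJoin.mpr ⟨v, rfl, s, hs, right_mem_segment 𝕜 v s⟩
    rw [hall]
    exact convex_univ
  · simp only [mem_convexJoin_singleton_left_iff_of_notMem hs]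
    exact convex_setOf_sub_mem_nonneg_smul ((convex_singleton s).sub hC) s

theorem convex_setOf_mem_convexHull_insert (R : Set E) (s : E) :
    Convex 𝕜 {v | s ∈ convexHull 𝕜 (insert v R)} := by
  rcases R.eq_empty_or_nonempty with rfl | hR
  · simp [convex_singleton]
  · simp only [convexHull_insert hR]
    exact convex_setOf_mem_convexJoin_singleton_left (convex_convexHull 𝕜 R) s

end ConvexJoin

theorem Convex.setOf_convexHull_insert_subset_eq {𝕜 E : Type*} [Semiring 𝕜] [PartialOrder 𝕜]
    [AddCommMonoid E] [Module 𝕜 E] {P R : Set E} (hP : Convex 𝕜 P) (hR : R ⊆ P) :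
    {v | convexHull 𝕜 (insert v R) ⊆ P} = P := by
  ext v
  simp [hP.convexHull_subset_iff, insert_subset_iff, hR]

theorem last_vertex_feasible_set_convex_general {d : ℕ}
    (P : Set (Fin d → ℝ)) (hP : Convex ℝ P)
    (S : Set (Fin d → ℝ))
    (v : Fin d → (Fin d → ℝ)) (hv : ∀ i, v i ∈ P) :
    Convex ℝ {v' : Fin d → ℝ |
      S ⊆ convexHull ℝ (insert v' (Set.range v)) ∧
      convexHull ℝ (insert v' (Set.range v)) ⊆ P} := by
  have hfeasible : {v' : Fin d → ℝ | S ⊆ convexHull ℝ (insert v' (Set.range v)) ∧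
      convexHull ℝ (insert v' (Set.range v)) ⊆ P} =
      (⋂ s ∈ S, {v' | s ∈ convexHull ℝ (insert v' (Set.range v))}) ∩
        {v' | convexHull ℝ (insert v' (Set.range v)) ⊆ P} := by
    ext v'
    simp [subset_def]
  rw [hfeasible, hP.setOf_convexHull_insert_subset_eq (range_subset_iff.mpr hv)]
  exact (convex_iInter₂ fun s _ ↦ convex_setOf_mem_convexHull_insert _ s).inter hP

/-- Consequence of the Section 4 theorem: the set of feasible positions for the last
vertex of a solution simplex (with the other `d` vertices fixed in `P`) is convex. -/
theorem last_vertex_feasible_set_convex {d : ℕ}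
    (P : Set (Fin d → ℝ)) (hP : Convex ℝ P)
    (S : Set (Fin d → ℝ)) (hSfin : S.Finite)
    (v : Fin d → (Fin d → ℝ)) (hv : ∀ i, v i ∈ P) :
    Convex ℝ {v' : Fin d → ℝ |
      S ⊆ convexHull ℝ (insert v' (Set.range v)) ∧
      convexHull ℝ (insert v' (Set.range v)) ⊆ P} :=
  last_vertex_feasible_set_convex_general P hP S v hv
end
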